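/- (Injectivity of the exponential map) The matrix exponential is injective on the set of real skew-symmetric n×n matrices Ω with ‖Ω‖₂ < π: if Ω₁, Ω₂ are skew-symmetric with ‖Ω₁‖₂ < π, ‖Ω₂‖₂ < π and exp(Ω₁) = exp(Ω₂), then Ω₁ = Ω₂. -/

import Mathlib

open Matrix

noncomputable section

/-- Matrix exponential of a real square matrix. -/
def mexp {n : ℕ} (A : Matrix (Fin n) (Fin n) ℝ) : Matrix (Fin n) (Fin n) ℝ :=
  NormedSpace.exp A

/-- Skew-symmetric part: `skew M = (M - Mᵀ)/2`. -/
def skewPart {n : ℕ} (M : Matrix (Fin n) (Fin n) ℝ) : Matrix (Fin n) (Fin n) ℝ :=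
  (1 / 2 : ℝ) • (M - Mᵀ)

/-- Frobenius norm of a real square matrix. -/
def frobNorm {n : ℕ} (A : Matrix (Fin n) (Fin n) ℝ) : ℝ :=
  Real.sqrt (∑ i, ∑ j, (A i j) ^ 2)

/-- The singular values of `A`: square roots of the eigenvalues of `AᴴA = AᵀA`. -/
def singVals {n : ℕ} (A : Matrix (Fin n) (Fin n) ℝ) : Fin n → ℝ :=
  fun i => Real.sqrt ((show (Aᵀ * A).IsHermitian by
    simpa [conjTranspose_eq_transpose_of_trivial] using
      Matrix.isHermitian_conjTranspose_mul_self A).eigenvalues i)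

/-- Largest singular value of `A`. -/
def sigmaMax {n : ℕ} (A : Matrix (Fin n) (Fin n) ℝ) : ℝ := ⨆ i, singVals A i

/-- Smallest singular value of `A`. -/
def sigmaMin {n : ℕ} (A : Matrix (Fin n) (Fin n) ℝ) : ℝ := ⨅ i, singVals A i

/-- Spectral norm (largest singular value) of `A`. -/
def specNorm {n : ℕ} (A : Matrix (Fin n) (Fin n) ℝ) : ℝ := sigmaMax A

/-- Riemannian distance on a connected component of `O(n)`:
`dist(X,Y) = min { ‖Ω‖_F : Ω skew-symmetric, X·exp(Ω) = Y }`. -/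
def Odist {n : ℕ} (X Y : Matrix (Fin n) (Fin n) ℝ) : ℝ :=
  sInf {d : ℝ | ∃ Ω : Matrix (Fin n) (Fin n) ℝ, Ωᵀ = -Ω ∧ X * mexp Ω = Y ∧ d = frobNorm Ω}

end

/-!
After complexification a real skew-symmetric `Ω` is `i • x` with `x = -i • Ω` self-adjoint, so
`exp Ω` is the unitary `exp (i • x)`. When `‖x‖ < π` the spectrum of `x` lies in `(-π, π)`, where
the principal argument inverts `t ↦ exp (i t)`; hence the continuous functional calculus recovers
`x` from `exp (i • x)`. The spectral norm of `Ω` dominates the C⋆-norm of its complexification: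
`‖Ω‖² = ‖Ωᴴ Ω‖` by the C⋆-identity, and `‖Ωᴴ Ω‖` is an eigenvalue of `Ωᵀ Ω`.
-/

open Complex selfAdjoint Unitary

theorem NormedSpace.exp_injOn_skewAdjoint {A : Type*} [CStarAlgebra A] :
    Set.InjOn exp {a : A | a ∈ skewAdjoint A ∧ ‖a‖ < Real.pi} := by
  rintro a ⟨ha, ha'⟩ b ⟨hb, hb'⟩ hab
  let x : ∀ c ∈ skewAdjoint A, selfAdjoint A := fun c hc =>
    -⟨I • c, .I_smul_of_mem_skewAdjoint hc⟩
  have I_smul_x (c : A) (hc) : I • (x c hc : A) = c := by simp [x, smul_smul]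
  have norm_x (c : A) (hc) : ‖x c hc‖ = ‖c‖ := by simp [x, norm_smul]
  have expUnitary_eq : expUnitary (x a ha) = expUnitary (x b hb) := by
    ext
    simpa only [expUnitary_coe, I_smul_x] using hab
  have x_eq : x a ha = x b hb := by
    rw [← argSelfAdjoint_expUnitary ((norm_x a ha).trans_lt ha'),
      ← argSelfAdjoint_expUnitary ((norm_x b hb).trans_lt hb'), expUnitary_eq]
  rw [← I_smul_x a ha, ← I_smul_x b hb, x_eq]

namespace Matrix

variable {n : Type*}

theorem map_ofReal_mem_skewAdjoint {Ω : Matrix n n ℝ} (h : Ωᵀ = -Ω) :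
    Ω.map ofReal ∈ skewAdjoint (Matrix n n ℂ) := by
  ext i j
  simpa using congrArg ofReal (congrFun (congrFun h i) j)

variable [Fintype n] [DecidableEq n]

theorem exp_map_ofReal (M : Matrix n n ℝ) :
    NormedSpace.exp (M.map ofReal) = (NormedSpace.exp M).map ofReal := by
  -- `exp` depends only on the topology, so any matrix norm may be chosen to apply `map_exp`.
  open scoped Norms.L2Operator in
  let +nondep : NormedAlgebra ℚ (Matrix n n ℝ) := .restrictScalars ℚ ℝ _
  exact (NormedSpace.map_exp ofRealHom.mapMatrix (continuous_id.matrix_map continuous_ofReal) M).symm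

theorem spectrum_real_map_ofReal_subset (M : Matrix n n ℝ) :
    spectrum ℝ (M.map ofReal) ⊆ spectrum ℝ M :=
  AlgHom.spectrum_apply_subset (Algebra.ofId ℝ ℂ).mapMatrix M

end Matrix

open scoped Matrix.Norms.L2Operator MatrixOrder in
theorem l2_opNorm_map_ofReal_le_specNorm {n : ℕ} (M : Matrix (Fin n) (Fin n) ℝ) :
    ‖M.map ofReal‖ ≤ specNorm M := by
  rcases Nat.eq_zero_or_pos n with rfl | hn
  · simp [Subsingleton.elim (M.map ofReal) 0, specNorm, sigmaMax, Real.iSup_of_isEmpty]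
  have : NeZero n := ⟨hn.ne'⟩
  have hMM : (Mᵀ * M).IsHermitian := by simpa using isHermitian_conjTranspose_mul_self M
  have star_mul_self : star (M.map ofReal) * M.map ofReal = (Mᵀ * M).map ofReal := by
    ext
    simp [Matrix.mul_apply]
  obtain ⟨i, hi⟩ : ‖M.map ofReal‖ ^ 2 ∈ Set.range hMM.eigenvalues := by
    rw [← hMM.spectrum_real_eq_range_eigenvalues, sq, ← CStarRing.norm_star_mul_self]
    refine Matrix.spectrum_real_map_ofReal_subset _ ?_
    rw [← star_mul_self]
    exact CStarAlgebra.norm_mem_spectrum_of_nonneg (star_mul_self_nonneg _)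
  calc ‖M.map ofReal‖ = singVals M i := by
        change _ = Real.sqrt (hMM.eigenvalues i)
        rw [hi, Real.sqrt_sq (norm_nonneg _)]
    _ ≤ specNorm M := le_ciSup (Set.finite_range _).bddAbove i

/-- the matrix exponential is injective on skew-symmetric
matrices of spectral norm less than `π`. -/
theorem mexp_injective_on_skew {n : ℕ}
    (Ω₁ Ω₂ : Matrix (Fin n) (Fin n) ℝ)
    (h₁ : Ω₁ᵀ = -Ω₁) (h₂ : Ω₂ᵀ = -Ω₂)
    (hn₁ : specNorm Ω₁ < Real.pi) (hn₂ : specNorm Ω₂ < Real.pi)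
    (h : mexp Ω₁ = mexp Ω₂) : Ω₁ = Ω₂ := by
  open scoped Matrix.Norms.L2Operator in
  refine Matrix.map_injective ofReal_injective <| NormedSpace.exp_injOn_skewAdjoint
    ⟨Matrix.map_ofReal_mem_skewAdjoint h₁, (l2_opNorm_map_ofReal_le_specNorm Ω₁).trans_lt hn₁⟩
    ⟨Matrix.map_ofReal_mem_skewAdjoint h₂, (l2_opNorm_map_ofReal_le_specNorm Ω₂).trans_lt hn₂⟩ ?_
  rw [Matrix.exp_map_ofReal, Matrix.exp_map_ofReal]
  exact congrArg (Matrix.map · ofReal) h
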